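/- With notation as in the bijection construction: Θ(Φ(P)) = P for every G-parking function P; that is, the map Θ defined from spanning trees to parking functions by counting π(T)-smaller outgoing edges is a left inverse of the tree-growing map Φ. -/

import Mathlib

open Finset

open scoped Classical

/-- A subtree of the digraph (with multiplicity function `E`) on vertices
`{0,...,n}`, rooted at `0`: every non-root vertex of the subtree has a unique
outgoing edge (its parent together with the index of a parallel edge), and
iterating parents reaches the root. -/
structure Subtree (n : ℕ) (E : Fin (n+1) → Fin (n+1) → ℕ) where
  par : Fin (n+1) → Option (Fin (n+1) × ℕ)
  root_par : par 0 = none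
  edge_valid : ∀ v p k, par v = some (p, k) → k < E v p
  parent_mem : ∀ v p k, par v = some (p, k) → p = 0 ∨ (par p).isSome
  reaches : ∀ v, (par v).isSome →
    Relation.ReflTransGen (fun a c => ∃ k, par a = some (c, k)) v 0

noncomputable def Subtree.verts {n : ℕ} {E : Fin (n+1) → Fin (n+1) → ℕ}
    (t : Subtree n E) : Finset (Fin (n+1)) :=
  Finset.univ.filter (fun v => v = 0 ∨ (t.par v).isSome)

def Subtree.IsSubtreeOf {n : ℕ} {E : Fin (n+1) → Fin (n+1) → ℕ}
    (t T : Subtree n E) : Prop :=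
  ∀ v, (t.par v).isSome → t.par v = T.par v

def Subtree.IsSpanning {n : ℕ} {E : Fin (n+1) → Fin (n+1) → ℕ}
    (T : Subtree n E) : Prop :=
  ∀ v, v ∈ T.verts

/-- `b` is a `G`-parking function: for every non-empty set `U` of non-root
vertices there is `j ∈ U` with more than `b j` edges from `j` to the
complement of `U`. (The value `b 0` at the root is irrelevant.) -/
def IsParking {n : ℕ} (E : Fin (n+1) → Fin (n+1) → ℕ) (b : Fin (n+1) → ℕ) : Prop :=
  ∀ U : Finset (Fin (n+1)), U.Nonempty → 0 ∉ U → ∃ j ∈ U, b j < ∑ i ∈ Uᶜ, E j i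

/-- An assignment of a relation on vertices to every rooted subtree. -/
structure TreeOrders (n : ℕ) (E : Fin (n+1) → Fin (n+1) → ℕ) where
  lt : Subtree n E → Fin (n+1) → Fin (n+1) → Prop

/-- A proper set of tree orders: each `lt T` is a strict total order on the
vertices of `T`, parents are smaller than children, and the orders are
consistent under restriction to rooted subtrees. -/
def TreeOrders.Proper {n : ℕ} {E : Fin (n+1) → Fin (n+1) → ℕ}
    (P : TreeOrders n E) : Prop :=
  (∀ T : Subtree n E, ∀ i ∈ T.verts, ¬ P.lt T i i) ∧
  (∀ T : Subtree n E, ∀ i ∈ T.verts, ∀ j ∈ T.verts, ∀ l ∈ T.verts,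
     P.lt T i j → P.lt T j l → P.lt T i l) ∧
  (∀ T : Subtree n E, ∀ i ∈ T.verts, ∀ j ∈ T.verts, i ≠ j → P.lt T i j ∨ P.lt T j i) ∧
  (∀ T : Subtree n E, ∀ j q k, T.par j = some (q, k) → P.lt T q j) ∧
  (∀ t T : Subtree n E, t.IsSubtreeOf T →
     ∀ i ∈ t.verts, ∀ j ∈ t.verts, (P.lt t i j ↔ P.lt T i j))

/-- The number of edges out of `j` that are smaller (w.r.t. the order `lt` on
targets, parallel edges broken by their index) than the edge `(j,q)` with
parallel index `k`. -/
noncomputable def thetaVal {n : ℕ} (E : Fin (n+1) → Fin (n+1) → ℕ)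
    (lt : Fin (n+1) → Fin (n+1) → Prop) (j q : Fin (n+1)) (k : ℕ) : ℕ :=
  (∑ i ∈ Finset.univ.filter (fun i => lt i q), E j i) + k

/-- The map Θ: given a tree order assignment, send a tree to the tuple whose
`j`-th entry counts the edges out of `j` smaller than the tree edge out of `j`. -/
noncomputable def Theta {n : ℕ} (E : Fin (n+1) → Fin (n+1) → ℕ)
    (P : TreeOrders n E) (T : Subtree n E) : Fin (n+1) → ℕ :=
  fun j => match T.par j with
  | none => 0
  | some (q, k) => thetaVal E (P.lt T) j q k

/-- `(q,k)` is the edge from `j` into the vertex set `S` such that exactly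
`bj` edges from `j` into `S` are smaller than it (w.r.t. `lt`, parallel edges
broken by index). -/
def ChosenEdge {n : ℕ} (E : Fin (n+1) → Fin (n+1) → ℕ) (S : Finset (Fin (n+1)))
    (lt : Fin (n+1) → Fin (n+1) → Prop) (bj : ℕ) (j q : Fin (n+1)) (k : ℕ) : Prop :=
  q ∈ S ∧ k < E j q ∧ (∑ i ∈ S.filter (fun i => lt i q), E j i) + k = bj

/-- A run of the inductive construction of Φ(b): start with the tree on the
root alone; at step `m` consider the set `V_m` of vertices `j` outside
`t (m-1)` with at least `b j + 1` edges into `t (m-1)`, adjoin all of them by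
their chosen edges to form an auxiliary tree, and let `p m` be the smallest
vertex of `V_m` in the order of that auxiliary tree; `t m` is `t (m-1)` with
`p m` adjoined by its chosen edge. -/
structure PhiRun {n : ℕ} (E : Fin (n+1) → Fin (n+1) → ℕ) (P : TreeOrders n E)
    (b : Fin (n+1) → ℕ) where
  t : ℕ → Subtree n E
  p : ℕ → Fin (n+1)
  init : ∀ v, (t 0).par v = none
  p0 : p 0 = 0
  sub : ∀ m, 1 ≤ m → m ≤ n → (t (m-1)).IsSubtreeOf (t m)
  newvert : ∀ m, 1 ≤ m → m ≤ n → p m ∉ (t (m-1)).verts ∧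
      ∀ v, v ≠ p m → (t m).par v = (t (m-1)).par v
  eligible : ∀ m, 1 ≤ m → m ≤ n →
      b (p m) + 1 ≤ ∑ i ∈ (t (m-1)).verts, E (p m) i
  chosen : ∀ m, 1 ≤ m → m ≤ n → ∃ q k, (t m).par (p m) = some (q, k) ∧
      ChosenEdge E (t (m-1)).verts (P.lt (t (m-1))) (b (p m)) (p m) q k
  minimal : ∀ m, 1 ≤ m → m ≤ n → ∃ taux : Subtree n E,
      (t (m-1)).IsSubtreeOf taux ∧
      (∀ j, j ∈ taux.verts ↔ (j ∈ (t (m-1)).verts ∨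
          (j ∉ (t (m-1)).verts ∧ b j + 1 ≤ ∑ i ∈ (t (m-1)).verts, E j i))) ∧
      (∀ j, j ∉ (t (m-1)).verts → b j + 1 ≤ ∑ i ∈ (t (m-1)).verts, E j i →
        ∃ q k, taux.par j = some (q, k) ∧
          ChosenEdge E (t (m-1)).verts (P.lt (t (m-1))) (b j) j q k) ∧
      (∀ j, j ∉ (t (m-1)).verts → b j + 1 ≤ ∑ i ∈ (t (m-1)).verts, E j i →
        j ≠ p m → P.lt taux (p m) j)

/-! The heart of the proof is that Φ adjoins the vertices in increasing order of the
final tree order `π(Φ(b))`; this is proved by strong induction on the step. Let `p l` be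
adjoined before `j = p m`. If `j` was already eligible at step `l`, then its edge chosen at
step `l` is still the chosen one at step `m` (everything adjoined in between is larger than
its target), so the auxiliary tree of step `l` and the final tree share the subtree
`t l + j`, and consistency of the tree orders transfers `p l < j` from the former to the
latter. Otherwise the `b j + 1` smallest edges from `j` into `t (m-1)` cannot all land in
`t (l-1)`, so the target `q` of the tree edge of `j` is at least some vertex adjoined at a
step `≥ l`, and `p l ≤ q < j`.

Once this is known, the edges from `p m` that are smaller than its tree edge in the final
order all end in `t (m-1)`, and there are exactly `b (p m)` of them by the choice of the
edge. -/

namespace Subtree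

variable {n : ℕ} {E : Fin (n+1) → Fin (n+1) → ℕ}

lemma mem_verts_iff {t : Subtree n E} {v : Fin (n+1)} :
    v ∈ t.verts ↔ v = 0 ∨ (t.par v).isSome := by
  simp [Subtree.verts]

lemma zero_mem_verts (t : Subtree n E) : 0 ∈ t.verts :=
  mem_verts_iff.2 (.inl rfl)

lemma mem_verts_of_par_eq_some {t : Subtree n E} {v q : Fin (n+1)} {k : ℕ}
    (h : t.par v = some (q, k)) : v ∈ t.verts :=
  mem_verts_iff.2 (.inr (by simp [h]))

lemma mem_verts_of_par_eq_some_parent {t : Subtree n E} {v q : Fin (n+1)} {k : ℕ}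
    (h : t.par v = some (q, k)) : q ∈ t.verts :=
  mem_verts_iff.2 (t.parent_mem v q k h)

lemma par_eq_none_of_notMem {t : Subtree n E} {v : Fin (n+1)} (h : v ∉ t.verts) :
    t.par v = none := by
  simp only [mem_verts_iff, not_or] at h
  exact Option.not_isSome_iff_eq_none.1 h.2

namespace IsSubtreeOf

lemma refl (t : Subtree n E) : t.IsSubtreeOf t := fun _ _ => rfl

lemma trans {t t' t'' : Subtree n E} (h : t.IsSubtreeOf t') (h' : t'.IsSubtreeOf t'') :
    t.IsSubtreeOf t'' := fun v hv => (h v hv).trans (h' v (h v hv ▸ hv))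

lemma par_eq {t T : Subtree n E} (h : t.IsSubtreeOf T) {v q : Fin (n+1)} {k : ℕ}
    (hv : t.par v = some (q, k)) : T.par v = some (q, k) :=
  (h v (by simp [hv])).symm.trans hv

lemma verts_subset {t T : Subtree n E} (h : t.IsSubtreeOf T) : t.verts ⊆ T.verts := by
  intro v hv
  rcases mem_verts_iff.1 hv with rfl | hs
  · exact zero_mem_verts T
  · exact mem_verts_iff.2 (.inr (h v hs ▸ hs))

end IsSubtreeOf

noncomputable def extend (t : Subtree n E) (j q : Fin (n+1)) (k : ℕ)
    (hk : k < E j q) (hq : q ∈ t.verts) (hj : j ∉ t.verts) : Subtree n E where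
  par := Function.update t.par j (some (q, k))
  root_par := by
    have hj0 : (0 : Fin (n+1)) ≠ j := fun h => hj (h ▸ zero_mem_verts t)
    rw [Function.update_of_ne hj0, t.root_par]
  edge_valid v p k' hv := by
    by_cases hvj : v = j
    · rw [hvj, Function.update_self, Option.some.injEq, Prod.mk.injEq] at hv
      obtain ⟨rfl, rfl⟩ := hv
      exact hvj ▸ hk
    · rw [Function.update_of_ne hvj] at hv
      exact t.edge_valid v p k' hv
  parent_mem v p k' hv := by
    have hnj : ∀ w, (t.par w).isSome → w ≠ j := fun w hw h => by
      simp [h, par_eq_none_of_notMem hj] at hw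
    have hp : p ∈ t.verts := by
      by_cases hvj : v = j
      · rw [hvj, Function.update_self, Option.some.injEq, Prod.mk.injEq] at hv
        exact hv.1 ▸ hq
      · rw [Function.update_of_ne hvj] at hv
        exact mem_verts_of_par_eq_some_parent hv
    rcases mem_verts_iff.1 hp with h0 | hs
    · exact .inl h0
    · exact .inr (by rwa [Function.update_of_ne (hnj p hs)])
  reaches v hv := by
    have hlift : ∀ a, Relation.ReflTransGen (fun a c => ∃ k', t.par a = some (c, k')) a 0 →
        Relation.ReflTransGen
          (fun a c => ∃ k', Function.update t.par j (some (q, k)) a = some (c, k')) a 0 := by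
      refine fun a => Relation.ReflTransGen.mono (fun a c ⟨k', hk'⟩ => ⟨k', ?_⟩) a 0
      have haj : a ≠ j := fun h => by simp [h, par_eq_none_of_notMem hj] at hk'
      rwa [Function.update_of_ne haj]
    by_cases hvj : v = j
    · subst hvj
      have hstep : ∃ k', Function.update t.par v (some (q, k)) v = some (q, k') :=
        ⟨k, Function.update_self ..⟩
      rcases mem_verts_iff.1 hq with rfl | hs
      · exact .single hstep
      · exact .head hstep (hlift q (t.reaches q hs))
    · rw [Function.update_of_ne hvj] at hv
      exact hlift v (t.reaches v hv)

section extend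

variable {t : Subtree n E} {j q : Fin (n+1)} {k : ℕ} {hk : k < E j q} {hq : q ∈ t.verts}
  {hj : j ∉ t.verts}

lemma extend_par_self : (t.extend j q k hk hq hj).par j = some (q, k) :=
  Function.update_self ..

lemma extend_par_of_ne {v : Fin (n+1)} (h : v ≠ j) :
    (t.extend j q k hk hq hj).par v = t.par v :=
  Function.update_of_ne h ..

lemma extend_isSubtreeOf {X : Subtree n E} (htX : t.IsSubtreeOf X)
    (hXj : X.par j = some (q, k)) : (t.extend j q k hk hq hj).IsSubtreeOf X := by
  intro v hv
  by_cases hvj : v = j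
  · rw [hvj, extend_par_self, hXj]
  · rw [extend_par_of_ne hvj] at hv ⊢
    exact htX v hv

end extend

end Subtree

namespace ChosenEdge

variable {n : ℕ} {E : Fin (n+1) → Fin (n+1) → ℕ} {S : Finset (Fin (n+1))}
  {lt : Fin (n+1) → Fin (n+1) → Prop} {bj : ℕ} {j q : Fin (n+1)} {k : ℕ}

lemma lt_sum_insert (h : ChosenEdge E S lt bj j q k) (hq : ¬ lt q q) :
    bj < ∑ i ∈ insert q (S.filter (lt · q)), E j i := by
  obtain ⟨-, hk, hsum⟩ := h
  rw [Finset.sum_insert (by simp [hq])]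
  omega

lemma exists_notMem {S' : Finset (Fin (n+1))} (h : ChosenEdge E S lt bj j q k)
    (hq : ¬ lt q q) (hS' : ∑ i ∈ S', E j i ≤ bj) :
    ∃ i ∈ S, (i = q ∨ lt i q) ∧ i ∉ S' := by
  by_contra! hall
  have hsub : insert q (S.filter (lt · q)) ⊆ S' := by
    intro i hi
    rcases Finset.mem_insert.1 hi with rfl | hi
    · exact hall i h.1 (.inl rfl)
    · exact hall i (Finset.mem_filter.1 hi).1 (.inr (Finset.mem_filter.1 hi).2)
  have := Finset.sum_le_sum_of_subset (f := fun i => E j i) hsub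
  have := h.lt_sum_insert hq
  omega

lemma unique (hirr : ∀ i ∈ S, ¬ lt i i)
    (htrans : ∀ i ∈ S, ∀ j ∈ S, ∀ l ∈ S, lt i j → lt j l → lt i l)
    (htot : ∀ i ∈ S, ∀ j ∈ S, i ≠ j → lt i j ∨ lt j i)
    {q' : Fin (n+1)} {k' : ℕ} (h : ChosenEdge E S lt bj j q k)
    (h' : ChosenEdge E S lt bj j q' k') : q = q' ∧ k = k' := by
  have not_lt : ∀ {a c ka kc}, ChosenEdge E S lt bj j a ka → ChosenEdge E S lt bj j c kc →
      ¬ lt a c := by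
    intro a c ka kc ha hc hac
    have hsub : insert a (S.filter (lt · a)) ⊆ S.filter (lt · c) := by
      intro i hi
      rcases Finset.mem_insert.1 hi with rfl | hi
      · exact Finset.mem_filter.2 ⟨ha.1, hac⟩
      · obtain ⟨hiS, hia⟩ := Finset.mem_filter.1 hi
        exact Finset.mem_filter.2 ⟨hiS, htrans i hiS a ha.1 c hc.1 hia hac⟩
    have := Finset.sum_le_sum_of_subset (f := fun i => E j i) hsub
    have := ha.lt_sum_insert (hirr a ha.1)
    have := hc.2.2
    omega
  by_cases hqq : q = q'
  · subst hqq
    exact ⟨rfl, by have := h.2.2; have := h'.2.2; omega⟩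
  · rcases htot q h.1 q' h'.1 hqq with hlt | hlt
    · exact absurd hlt (not_lt h h')
    · exact absurd hlt (not_lt h' h)

lemma congr_lt {lt' : Fin (n+1) → Fin (n+1) → Prop}
    (hlt : ∀ u ∈ S, ∀ w ∈ S, lt u w ↔ lt' u w) (h : ChosenEdge E S lt bj j q k) :
    ChosenEdge E S lt' bj j q k := by
  refine ⟨h.1, h.2.1, ?_⟩
  rw [← h.2.2, Finset.filter_congr fun i hi => (hlt i hi q h.1).symm]

lemma mono {S' : Finset (Fin (n+1))} (hSS' : S ⊆ S') (hnew : ∀ i ∈ S', i ∉ S → ¬ lt i q)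
    (h : ChosenEdge E S lt bj j q k) : ChosenEdge E S' lt bj j q k := by
  refine ⟨hSS' h.1, h.2.1, ?_⟩
  rw [← h.2.2]
  congr 2
  ext i
  simp only [Finset.mem_filter]
  exact ⟨fun ⟨hi, hlt⟩ => ⟨by_contra fun hiS => hnew i hi hiS hlt, hlt⟩,
    fun ⟨hi, hlt⟩ => ⟨hSS' hi, hlt⟩⟩

end ChosenEdge

namespace TreeOrders.Proper

variable {n : ℕ} {E : Fin (n+1) → Fin (n+1) → ℕ} {P : TreeOrders n E} (hP : P.Proper)
  {T : Subtree n E}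
include hP

lemma irrefl {i : Fin (n+1)} (hi : i ∈ T.verts) : ¬ P.lt T i i := hP.1 T i hi

lemma trans {i j l : Fin (n+1)} (hi : i ∈ T.verts) (hj : j ∈ T.verts) (hl : l ∈ T.verts) :
    P.lt T i j → P.lt T j l → P.lt T i l :=
  hP.2.1 T i hi j hj l hl

lemma asymm {i j : Fin (n+1)} (hi : i ∈ T.verts) (hj : j ∈ T.verts) (h : P.lt T i j) :
    ¬ P.lt T j i :=
  fun h' => hP.irrefl hi (hP.trans hi hj hi h h')

lemma lt_of_par_eq_some {j q : Fin (n+1)} {k : ℕ} (h : T.par j = some (q, k)) :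
    P.lt T q j :=
  hP.2.2.2.1 T j q k h

lemma lt_iff_of_isSubtreeOf {t : Subtree n E} (h : t.IsSubtreeOf T) {i j : Fin (n+1)}
    (hi : i ∈ t.verts) (hj : j ∈ t.verts) : P.lt t i j ↔ P.lt T i j :=
  hP.2.2.2.2 t T h i hi j hj

lemma chosenEdge_unique {S : Finset (Fin (n+1))} (hS : S ⊆ T.verts) {bj : ℕ}
    {j q q' : Fin (n+1)} {k k' : ℕ} (h : ChosenEdge E S (P.lt T) bj j q k)
    (h' : ChosenEdge E S (P.lt T) bj j q' k') : q = q' ∧ k = k' :=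
  h.unique (fun _ hi => hP.irrefl (hS hi))
    (fun _ hi _ hj _ hl => hP.trans (hS hi) (hS hj) (hS hl))
    (fun _ hi _ hj => hP.2.2.1 T _ (hS hi) _ (hS hj)) h'

lemma lt_iff_of_common_leaf {t X : Subtree n E} (htT : t.IsSubtreeOf T)
    (htX : t.IsSubtreeOf X) {j q u : Fin (n+1)} {k : ℕ} (hTj : T.par j = some (q, k))
    (hXj : X.par j = some (q, k)) (hq : q ∈ t.verts) (hj : j ∉ t.verts)
    (hu : u ∈ t.verts) : P.lt T u j ↔ P.lt X u j := by
  set s := t.extend j q k (T.edge_valid j q k hTj) hq hj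
  have hsT : s.IsSubtreeOf T := Subtree.extend_isSubtreeOf htT hTj
  have hsX : s.IsSubtreeOf X := Subtree.extend_isSubtreeOf htX hXj
  have hus : u ∈ s.verts := Subtree.IsSubtreeOf.verts_subset (fun v hv => by
    have hvj : v ≠ j := fun h => by simp [h, Subtree.par_eq_none_of_notMem hj] at hv
    exact (Subtree.extend_par_of_ne hvj).symm) hu
  have hjs : j ∈ s.verts := Subtree.mem_verts_of_par_eq_some Subtree.extend_par_self
  exact (hP.lt_iff_of_isSubtreeOf hsT hus hjs).symm.trans (hP.lt_iff_of_isSubtreeOf hsX hus hjs)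

end TreeOrders.Proper

namespace PhiRun

variable {n : ℕ} {E : Fin (n+1) → Fin (n+1) → ℕ} {P : TreeOrders n E}
  {b : Fin (n+1) → ℕ} (r : PhiRun E P b)

lemma isSubtreeOf_of_le {a c : ℕ} (hac : a ≤ c) (hc : c ≤ n) :
    (r.t a).IsSubtreeOf (r.t c) := by
  induction c, hac using Nat.le_induction with
  | base => exact .refl _
  | succ c _ ih => exact ih (by omega) |>.trans (r.sub (c+1) (by omega) hc)

lemma verts_subset_of_le {a c : ℕ} (hac : a ≤ c) (hc : c ≤ n) :
    (r.t a).verts ⊆ (r.t c).verts :=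
  (r.isSubtreeOf_of_le hac hc).verts_subset

lemma verts_zero : (r.t 0).verts = {0} := by
  ext v
  simp [Subtree.mem_verts_iff, r.init v]

lemma verts_succ {m : ℕ} (hm : m < n) :
    (r.t (m+1)).verts = insert (r.p (m+1)) (r.t m).verts := by
  obtain ⟨q, k, hpar, -⟩ := r.chosen (m+1) (by omega) hm
  have hother := (r.newvert (m+1) (by omega) hm).2
  simp only [Nat.add_sub_cancel] at hother
  ext v
  by_cases hv : v = r.p (m+1)
  · simp [Subtree.mem_verts_iff, hv, hpar]
  · simp [Subtree.mem_verts_iff, hother v hv, hv]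

lemma card_verts {m : ℕ} (hm : m ≤ n) : #(r.t m).verts = m + 1 := by
  induction m with
  | zero => simp [r.verts_zero]
  | succ m ih =>
    have hnew := (r.newvert (m+1) (by omega) hm).1
    simp only [Nat.add_sub_cancel] at hnew
    rw [r.verts_succ (by omega), Finset.card_insert_of_notMem hnew, ih (by omega)]

lemma verts_final : (r.t n).verts = univ :=
  Finset.eq_univ_of_card _ (by simp [r.card_verts le_rfl])

lemma isSpanning : (r.t n).IsSpanning := fun v => r.verts_final ▸ Finset.mem_univ v

lemma p_mem_verts {l c : ℕ} (hl : 1 ≤ l) (hlc : l ≤ c) (hc : c ≤ n) :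
    r.p l ∈ (r.t c).verts := by
  obtain ⟨q, k, hpar, -⟩ := r.chosen l hl (by omega)
  exact r.verts_subset_of_le hlc hc (Subtree.mem_verts_of_par_eq_some hpar)

lemma exists_eq_p_of_mem_verts {a c : ℕ} (hac : a ≤ c) (hc : c ≤ n) {v : Fin (n+1)}
    (hv : v ∈ (r.t c).verts) (hva : v ∉ (r.t a).verts) :
    ∃ l, a < l ∧ l ≤ c ∧ v = r.p l := by
  induction c, hac using Nat.le_induction with
  | base => exact absurd hv hva
  | succ c hac ih =>
    rw [r.verts_succ (by omega), Finset.mem_insert] at hv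
    rcases hv with rfl | hv
    · exact ⟨c+1, by omega, le_rfl, rfl⟩
    · obtain ⟨l, hal, hlc, rfl⟩ := ih (by omega) hv
      exact ⟨l, hal, by omega, rfl⟩

def AddsLargest (l : ℕ) : Prop :=
  ∀ v ∈ (r.t (l-1)).verts, P.lt (r.t n) v (r.p l)

variable {r} (hP : P.Proper)
include hP

lemma lt_trans_final {u v w : Fin (n+1)} :
    P.lt (r.t n) u v → P.lt (r.t n) v w → P.lt (r.t n) u w :=
  hP.trans (r.isSpanning u) (r.isSpanning v) (r.isSpanning w)

lemma lt_of_chosen {m : ℕ} (hm : m ≤ n) {q : Fin (n+1)} {k : ℕ}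
    (hpar : (r.t m).par (r.p m) = some (q, k)) : P.lt (r.t n) q (r.p m) :=
  hP.lt_of_par_eq_some ((r.isSubtreeOf_of_le hm le_rfl).par_eq hpar)

lemma chosenEdge_final {a c : ℕ} (hac : a ≤ c) (hc : c ≤ n)
    (hinc : ∀ l, a < l → l ≤ c → r.AddsLargest l) {bj : ℕ} {j q : Fin (n+1)} {k : ℕ}
    (h : ChosenEdge E (r.t a).verts (P.lt (r.t a)) bj j q k) :
    ChosenEdge E (r.t c).verts (P.lt (r.t n)) bj j q k := by
  refine (h.congr_lt fun u hu w hw =>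
    hP.lt_iff_of_isSubtreeOf (r.isSubtreeOf_of_le (by omega) le_rfl) hu hw).mono
    (r.verts_subset_of_le hac hc) fun i hi hia => ?_
  obtain ⟨l, hal, hlc, rfl⟩ := r.exists_eq_p_of_mem_verts hac hc hi hia
  have hq : q ∈ (r.t (l-1)).verts := r.verts_subset_of_le (by omega) (by omega) h.1
  exact hP.asymm (r.isSpanning _) (r.isSpanning _) (hinc l hal hlc q hq)

lemma p_lt_p_of_eligible {l m : ℕ} (hl : 1 ≤ l) (hlm : l < m) (hm : m ≤ n)
    (hinc : ∀ l', l ≤ l' → l' < m → r.AddsLargest l')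
    (helig : b (r.p m) + 1 ≤ ∑ i ∈ (r.t (l-1)).verts, E (r.p m) i) :
    P.lt (r.t n) (r.p l) (r.p m) := by
  obtain ⟨taux, htaux, -, hchosen, hmin⟩ := r.minimal l hl (by omega)
  have hjm : r.p m ∉ (r.t (m-1)).verts := (r.newvert m (by omega) hm).1
  have hjl : r.p m ∉ (r.t (l-1)).verts :=
    fun h => hjm (r.verts_subset_of_le (by omega) (by omega) h)
  have hne : r.p m ≠ r.p l := fun h => hjm (h ▸ r.p_mem_verts hl (by omega) (by omega))
  obtain ⟨q, k, hpar_aux, hce_aux⟩ := hchosen (r.p m) hjl helig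
  obtain ⟨q', k', hpar, hce⟩ := r.chosen m (by omega) hm
  obtain ⟨rfl, rfl⟩ := hP.chosenEdge_unique (fun v _ => r.isSpanning v)
    (r.chosenEdge_final hP (by omega) (by omega) (fun l' h h' => hinc l' (by omega) (by omega))
      hce_aux)
    (r.chosenEdge_final hP le_rfl (by omega) (fun _ h h' => absurd h' (by omega)) hce)
  have htl_aux : (r.t l).IsSubtreeOf taux := by
    obtain ⟨q₁, k₁, hpar₁, hce₁⟩ := r.chosen l hl (by omega)
    obtain ⟨q₂, k₂, hpar₂, hce₂⟩ :=
      hchosen (r.p l) (r.newvert l hl (by omega)).1 (r.eligible l hl (by omega))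
    obtain ⟨rfl, rfl⟩ := hP.chosenEdge_unique subset_rfl hce₁ hce₂
    intro w hw
    by_cases hwl : w = r.p l
    · rw [hwl, hpar₁, hpar₂]
    · rw [(r.newvert l hl (by omega)).2 w hwl] at hw ⊢
      exact htaux w hw
  have hq : q ∈ (r.t l).verts := r.verts_subset_of_le (by omega) (by omega) hce_aux.1
  exact (hP.lt_iff_of_common_leaf (r.isSubtreeOf_of_le (by omega) le_rfl) htl_aux
    ((r.isSubtreeOf_of_le hm le_rfl).par_eq hpar) hpar_aux hq
    (fun h => hjm (r.verts_subset_of_le (by omega) (by omega) h))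
    (r.p_mem_verts hl le_rfl (by omega))).2 (hmin (r.p m) hjl helig hne)

lemma p_lt_p_of_not_eligible {l m : ℕ} (hl : 1 ≤ l) (hlm : l < m) (hm : m ≤ n)
    (hinc : ∀ l', l < l' → l' < m → r.AddsLargest l')
    (hnot : ∑ i ∈ (r.t (l-1)).verts, E (r.p m) i ≤ b (r.p m)) :
    P.lt (r.t n) (r.p l) (r.p m) := by
  obtain ⟨q, k, hpar, hce⟩ := r.chosen m (by omega) hm
  have hqj : P.lt (r.t n) q (r.p m) := r.lt_of_chosen hP hm hpar
  obtain ⟨i, hi, hiq, hil⟩ :=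
    (r.chosenEdge_final hP le_rfl (by omega) (fun _ h h' => absurd h' (by omega)) hce).exists_notMem
      (hP.irrefl (r.isSpanning q)) hnot
  obtain ⟨l', hll', hl'm, rfl⟩ := r.exists_eq_p_of_mem_verts (by omega) (by omega) hi hil
  have hl'j : P.lt (r.t n) (r.p l') (r.p m) := by
    rcases hiq with h | h
    · rwa [h]
    · exact lt_trans_final hP h hqj
  rcases (show l = l' ∨ l < l' by omega) with rfl | h
  · exact hl'j
  · exact lt_trans_final hP (hinc l' h (by omega) _ (r.p_mem_verts hl (by omega) (by omega))) hl'j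

theorem addsLargest : ∀ m, 1 ≤ m → m ≤ n → r.AddsLargest m := by
  intro m
  induction m using Nat.strong_induction_on with
  | _ m IH =>
  intro hm1 hm v hv
  have hinc : ∀ l, 1 ≤ l → l < m → r.AddsLargest l := fun l h1 h => IH l h h1 (by omega)
  by_cases hv0 : v ∈ (r.t 0).verts
  · rw [r.verts_zero, Finset.mem_singleton] at hv0
    subst hv0
    obtain ⟨q, k, hpar, hq, -⟩ := r.chosen m hm1 hm
    have hqj := r.lt_of_chosen hP hm hpar
    by_cases hq0 : q ∈ (r.t 0).verts
    · rw [r.verts_zero, Finset.mem_singleton] at hq0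
      rwa [← hq0]
    · obtain ⟨l, hl, hlm, rfl⟩ := r.exists_eq_p_of_mem_verts (Nat.zero_le _) (by omega) hq hq0
      exact lt_trans_final hP (hinc l hl (by omega) 0 (Subtree.zero_mem_verts _)) hqj
  · obtain ⟨l, hl, hlm, rfl⟩ := r.exists_eq_p_of_mem_verts (Nat.zero_le _) (by omega) hv hv0
    by_cases helig : b (r.p m) + 1 ≤ ∑ i ∈ (r.t (l-1)).verts, E (r.p m) i
    · exact r.p_lt_p_of_eligible hP hl (by omega) hm (fun l' h h' => hinc l' (by omega) h') helig
    · exact r.p_lt_p_of_not_eligible hP hl (by omega) hm (fun l' h h' => hinc l' (by omega) h')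
        (by omega)

lemma theta_p {m : ℕ} (hm1 : 1 ≤ m) (hm : m ≤ n) :
    Theta E P (r.t n) (r.p m) = b (r.p m) := by
  obtain ⟨q, k, hpar, hce⟩ := r.chosen m hm1 hm
  have hce_final := r.chosenEdge_final hP (by omega) le_rfl
    (fun l h h' => r.addsLargest hP l (by omega) h') hce
  rw [r.verts_final] at hce_final
  simp only [Theta, (r.isSubtreeOf_of_le hm le_rfl).par_eq hpar]
  exact hce_final.2.2

end PhiRun

theorem stmt_14_general (n : ℕ) (E : Fin (n+1) → Fin (n+1) → ℕ)
    (P : TreeOrders n E) (hP : P.Proper)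
    (b : Fin (n+1) → ℕ) (hb0 : b 0 = 0)
    (r : PhiRun E P b) :
    (r.t n).IsSpanning ∧ Theta E P (r.t n) = b := by
  refine ⟨r.isSpanning, funext fun j => ?_⟩
  by_cases hj : j ∈ (r.t 0).verts
  · rw [r.verts_zero, Finset.mem_singleton] at hj
    simp [hj, Theta, (r.t n).root_par, hb0]
  · obtain ⟨m, hm1, hm, rfl⟩ :=
      r.exists_eq_p_of_mem_verts (Nat.zero_le n) le_rfl (r.isSpanning j) hj
    exact r.theta_p hP hm1 hm

/-- Θ ∘ Φ = id: for any `G`-parking function `b` (with `b 0 = 0`), a run of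
the construction Φ on `b` produces a spanning tree whose Θ-image is `b`. -/
theorem stmt_14 (n : ℕ) (E : Fin (n+1) → Fin (n+1) → ℕ)
    (P : TreeOrders n E) (hP : P.Proper)
    (b : Fin (n+1) → ℕ) (hb : IsParking E b) (hb0 : b 0 = 0)
    (r : PhiRun E P b) :
    (r.t n).IsSpanning ∧ Theta E P (r.t n) = b :=
  stmt_14_general n E P hP b hb0 r
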